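/- In a finite-dimensional sequential product space, for a sharp effect p and an arbitrary effect a, ⌈p & a⌉ = ⌈p & ⌈a⌉⌉, where ⌈·⌉ denotes the least sharp effect above a given effect. -/
import Mathlib


open scoped BigOperators

/-- A sequential product space: an order unit space `(V, ≤, unit)` with a binary
operation `seq` on its effects satisfying axioms (S1)-(S7). -/
structure SPS (V : Type*) [NormedAddCommGroup V] [NormedSpace ℝ V] [PartialOrder V] where
  unit : V
  seq : V → V → V
  /-- The effects: elements `a` with `0 ≤ a ≤ unit`. -/
  Eff : V → Prop
  eff_iff : ∀ a : V, Eff a ↔ 0 ≤ a ∧ a ≤ unit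
  eff_unit : Eff unit
  /-- `V` is an ordered vector space. -/
  add_le_add_right' : ∀ a b c : V, a ≤ b → a + c ≤ b + c
  smul_le_smul' : ∀ (r : ℝ) (a b : V), 0 ≤ r → a ≤ b → r • a ≤ r • b
  /-- `unit` is a strong unit. -/
  strong : ∀ a : V, ∃ n : ℕ, -((n : ℝ) • unit) ≤ a ∧ a ≤ (n : ℝ) • unit
  /-- Archimedean property. -/
  arch : ∀ a : V, (∀ n : ℕ, a ≤ ((n : ℝ) + 1)⁻¹ • unit) → a ≤ 0
  /-- The norm of `V` is the order-unit norm. -/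
  norm_def : ∀ a : V, ‖a‖ = sInf {r : ℝ | 0 ≤ r ∧ -(r • unit) ≤ a ∧ a ≤ r • unit}
  seq_eff : ∀ a b : V, Eff a → Eff b → Eff (seq a b)
  /-- (S1) additivity in the second argument. -/
  s1 : ∀ a b c : V, Eff a → Eff b → Eff c → Eff (b + c) →
      seq a (b + c) = seq a b + seq a c
  /-- (S2) norm-continuity in the first argument. -/
  s2 : ∀ b : V, Eff b → ContinuousOn (fun a => seq a b) {a : V | Eff a}
  /-- (S3) unitality. -/
  s3 : ∀ a : V, Eff a → seq unit a = a
  /-- (S4) orthogonal effects are compatible. -/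
  s4 : ∀ a b : V, Eff a → Eff b → seq a b = 0 → seq b a = 0
  /-- (S5) associativity for compatible effects. -/
  s5 : ∀ a b c : V, Eff a → Eff b → Eff c → seq a b = seq b a →
      seq a (seq b c) = seq (seq a b) c
  /-- (S6) compatibility is preserved by complements. -/
  s6a : ∀ a b : V, Eff a → Eff b → seq a b = seq b a →
      seq a (unit - b) = seq (unit - b) a
  /-- (S6) compatibility is preserved by sums. -/
  s6b : ∀ a b c : V, Eff a → Eff b → Eff c → Eff (b + c) →
      seq a b = seq b a → seq a c = seq c a → seq a (b + c) = seq (b + c) a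
  /-- (S7) compatibility is preserved by the product. -/
  s7 : ∀ a b c : V, Eff a → Eff b → Eff c →
      seq a b = seq b a → seq a c = seq c a → seq a (seq b c) = seq (seq b c) a

namespace SPS

variable {V : Type*} [NormedAddCommGroup V] [NormedSpace ℝ V] [PartialOrder V]

/-- `a` and `b` are compatible: `a & b = b & a`. -/
def Compat (S : SPS V) (a b : V) : Prop := S.seq a b = S.seq b a

/-- An effect `p` is sharp when the only effect below both `p` and `unit - p` is `0`. -/
def Sharp (S : SPS V) (p : V) : Prop :=
  S.Eff p ∧ ∀ b : V, S.Eff b → b ≤ p → b ≤ S.unit - p → b = 0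

/-- An effect `p` is sharp (idempotence formulation): `p & p = p`. -/
def SharpI (S : SPS V) (p : V) : Prop := S.Eff p ∧ S.seq p p = p

/-- An effect `p` is atomic when `p ≠ 0` and every effect below `p` is a multiple of `p`. -/
def Atomic (S : SPS V) (p : V) : Prop :=
  S.Eff p ∧ p ≠ 0 ∧ ∀ a : V, S.Eff a → a ≤ p → ∃ t : ℝ, 0 ≤ t ∧ t ≤ 1 ∧ a = t • p

/-- `c` is the least sharp effect above `a` (the ceiling `⌈a⌉`). -/
def IsCeil (S : SPS V) (a c : V) : Prop :=
  S.SharpI c ∧ a ≤ c ∧ ∀ d : V, S.SharpI d → a ≤ d → c ≤ d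

/-- `f` is the greatest sharp effect below `a` (the floor `⌊a⌋`). -/
def IsFloor (S : SPS V) (a f : V) : Prop :=
  S.SharpI f ∧ f ≤ a ∧ ∀ d : V, S.SharpI d → d ≤ a → d ≤ f

end SPS

namespace SPS

variable {V : Type*} [NormedAddCommGroup V] [NormedSpace ℝ V] [PartialOrder V]
lemma addleft (S : SPS V) {b c : V} (a : V) (h : b ≤ c) : a + b ≤ a + c := by
  have := S.add_le_add_right' b c a h
  simpa [add_comm] using this

lemma sub_nonneg_of_le (S : SPS V) {a b : V} (h : a ≤ b) : 0 ≤ b - a := by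
  have := S.add_le_add_right' a b (-a) h
  simpa [sub_eq_add_neg] using this

lemma le_of_sub_nonneg (S : SPS V) {a b : V} (h : 0 ≤ b - a) : a ≤ b := by
  have := S.add_le_add_right' 0 (b - a) a h
  simpa using this

variable (S : SPS V)

lemma eff_nonneg {a : V} (ha : S.Eff a) : 0 ≤ a := ((S.eff_iff a).1 ha).1

lemma eff_le_unit {a : V} (ha : S.Eff a) : a ≤ S.unit := ((S.eff_iff a).1 ha).2

lemma eff_sub {a b : V} (ha : S.Eff a) (hb : S.Eff b) (h : a ≤ b) : S.Eff (b - a) := by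
  refine (S.eff_iff _).2 ⟨S.sub_nonneg_of_le h, ?_⟩
  have h1 : b - a ≤ b := by
    refine S.le_of_sub_nonneg ?_
    rw [sub_sub_cancel]
    exact S.eff_nonneg ha
  exact h1.trans (S.eff_le_unit hb)

lemma eff_compl {a : V} (ha : S.Eff a) : S.Eff (S.unit - a) :=
  S.eff_sub ha S.eff_unit (S.eff_le_unit ha)

lemma seq_nonneg {a b : V} (ha : S.Eff a) (hb : S.Eff b) : 0 ≤ S.seq a b :=
  S.eff_nonneg (S.seq_eff a b ha hb)

lemma seq_unit {a : V} (ha : S.Eff a) : S.seq a S.unit = a := by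
  have key : a + (S.unit - a) = S.unit := by abel
  have hca : S.seq a (S.unit - a) = S.seq (S.unit - a) a := S.s6a a a ha ha rfl
  have h := S.s6b a a (S.unit - a) ha ha (S.eff_compl ha)
      (by rw [key]; exact S.eff_unit) rfl hca
  rw [key] at h
  rw [h, S.s3 a ha]

lemma seq_mono {a b c : V} (ha : S.Eff a) (hb : S.Eff b) (hc : S.Eff c) (h : b ≤ c) :
    S.seq a b ≤ S.seq a c := by
  have hcb : S.Eff (c - b) := S.eff_sub hb hc h
  have key : b + (c - b) = c := by abel
  have h1 := S.s1 a b (c - b) ha hb hcb (by rw [key]; exact hc)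
  rw [key] at h1
  rw [h1]
  have := S.addleft (S.seq a b) (S.seq_nonneg ha hcb)
  rwa [add_zero] at this

lemma seq_le_left {a b : V} (ha : S.Eff a) (hb : S.Eff b) : S.seq a b ≤ a := by
  have := S.seq_mono ha hb S.eff_unit (S.eff_le_unit hb)
  rwa [S.seq_unit ha] at this

lemma sharp_seq_compl {p : V} (hp : S.SharpI p) : S.seq p (S.unit - p) = 0 := by
  have key : p + (S.unit - p) = S.unit := by abel
  have h1 := S.s1 p p (S.unit - p) hp.1 hp.1 (S.eff_compl hp.1)
      (by rw [key]; exact S.eff_unit)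
  rw [key, S.seq_unit hp.1, hp.2] at h1
  exact (left_eq_add.mp h1)

lemma sharp_compl_seq {p : V} (hp : S.SharpI p) : S.seq (S.unit - p) p = 0 :=
  S.s4 p (S.unit - p) hp.1 (S.eff_compl hp.1) (S.sharp_seq_compl hp)

lemma sharp_compl {p : V} (hp : S.SharpI p) : S.SharpI (S.unit - p) := by
  refine ⟨S.eff_compl hp.1, ?_⟩
  have key : p + (S.unit - p) = S.unit := by abel
  have h1 := S.s1 (S.unit - p) p (S.unit - p) (S.eff_compl hp.1) hp.1 (S.eff_compl hp.1)
      (by rw [key]; exact S.eff_unit)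
  rw [key, S.seq_unit (S.eff_compl hp.1), S.sharp_compl_seq hp, zero_add] at h1
  exact h1.symm

/-- If `a ≤ p` with `p` sharp, then `p & a = a` and `a & p = a`. -/
lemma le_sharp {p a : V} (hp : S.SharpI p) (ha : S.Eff a) (h : a ≤ p) :
    S.seq p a = a ∧ S.seq a p = a := by
  have hp' := S.eff_compl hp.1
  have h0 : S.seq (S.unit - p) a = 0 := by
    refine le_antisymm ?_ (S.seq_nonneg hp' ha)
    have := S.seq_mono hp' ha hp.1 h
    rwa [S.sharp_compl_seq hp] at this
  have h1 : S.seq a (S.unit - p) = 0 := S.s4 (S.unit - p) a hp' ha h0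
  have hcomp' : S.seq a (S.unit - p) = S.seq (S.unit - p) a := by rw [h0, h1]
  have hcomp : S.seq a p = S.seq p a := by
    have := S.s6a a (S.unit - p) ha hp' hcomp'
    rwa [sub_sub_cancel] at this
  have key : p + (S.unit - p) = S.unit := by abel
  have h2 := S.s1 a p (S.unit - p) ha hp.1 hp' (by rw [key]; exact S.eff_unit)
  rw [key, S.seq_unit ha, h1, add_zero] at h2
  exact ⟨by rw [← hcomp]; exact h2.symm, h2.symm⟩

/-- If `q` is sharp and `q & a = 0`, then `a ≤ 1 - q`. -/
lemma sharp_orth {q a : V} (hq : S.SharpI q) (ha : S.Eff a) (h : S.seq q a = 0) :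
    a ≤ S.unit - q := by
  have hq' := S.eff_compl hq.1
  have h1 : S.seq a q = 0 := S.s4 q a hq.1 ha h
  have hcomp : S.seq a q = S.seq q a := by rw [h, h1]
  have hcomp' : S.seq a (S.unit - q) = S.seq (S.unit - q) a := S.s6a a q ha hq.1 hcomp
  have key : q + (S.unit - q) = S.unit := by abel
  have h2 := S.s1 a q (S.unit - q) ha hq.1 hq' (by rw [key]; exact S.eff_unit)
  rw [key, S.seq_unit ha, h1, zero_add] at h2
  rw [h2, hcomp']
  exact S.seq_le_left hq' ha

/-- The product of compatible sharp effects is sharp. -/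
lemma sharp_seq {p q : V} (hp : S.SharpI p) (hq : S.SharpI q)
    (hc : S.seq p q = S.seq q p) : S.SharpI (S.seq p q) := by
  have he : S.Eff (S.seq p q) := S.seq_eff p q hp.1 hq.1
  refine ⟨he, ?_⟩
  have claim1 : S.seq q (S.seq p q) = S.seq p q := by
    rw [S.s5 q p q hq.1 hp.1 hq.1 hc.symm, ← hc, ← S.s5 p q q hp.1 hq.1 hq.1 hc, hq.2]
  calc S.seq (S.seq p q) (S.seq p q)
      = S.seq p (S.seq q (S.seq p q)) := (S.s5 p q (S.seq p q) hp.1 hq.1 he hc).symm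
    _ = S.seq p (S.seq p q) := by rw [claim1]
    _ = S.seq (S.seq p p) q := S.s5 p p q hp.1 hp.1 hq.1 rfl
    _ = S.seq p q := by rw [hp.2]

end SPS

/-- for sharp `p`, `⌈p & a⌉ = ⌈p & ⌈a⌉⌉`. -/
theorem ceil_seq_ceil {V : Type*} [NormedAddCommGroup V] [NormedSpace ℝ V]
    [PartialOrder V] [FiniteDimensional ℝ V] (S : SPS V) (p a d c₁ c₂ : V)
    (hp : S.SharpI p) (ha : S.Eff a) (hd : S.IsCeil a d)
    (h₁ : S.IsCeil (S.seq p a) c₁) (h₂ : S.IsCeil (S.seq p d) c₂) :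
    c₁ = c₂ := by
  obtain ⟨hc₁s, hpa_le, hc₁min⟩ := h₁
  obtain ⟨hc₂s, hpd_le, hc₂min⟩ := h₂
  obtain ⟨hds, ha_le, hdmin⟩ := hd
  have hEp := hp.1
  have hEd := hds.1
  have hEc₁ := hc₁s.1
  -- `c₁ ≤ c₂`
  have m1 : S.seq p a ≤ S.seq p d := S.seq_mono hEp ha hEd ha_le
  have le12 : c₁ ≤ c₂ := hc₁min c₂ hc₂s (m1.trans hpd_le)
  -- `c₁ ≤ p`, so `c₁` and `p` are compatible
  have hc₁p : c₁ ≤ p := hc₁min p hp (S.seq_le_left hEp ha)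
  obtain ⟨hpc₁, hc₁pe⟩ := S.le_sharp hp hEc₁ hc₁p
  -- `q := 1 - c₁` is sharp and compatible with `p`
  have hqs : S.SharpI (S.unit - c₁) := S.sharp_compl hc₁s
  have hEq := hqs.1
  have hcpq : S.seq p (S.unit - c₁) = S.seq (S.unit - c₁) p :=
    S.s6a p c₁ hEp hEc₁ (by rw [hpc₁, hc₁pe])
  -- `e := p & (1 - c₁)` is sharp
  have hes : S.SharpI (S.seq p (S.unit - c₁)) := S.sharp_seq hp hqs hcpq
  have hEe := hes.1
  -- `p = c₁ + e`
  have hkey1 : c₁ + (S.unit - c₁) = S.unit := by abel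
  have hsum : p = c₁ + S.seq p (S.unit - c₁) := by
    have h2 := S.s1 p c₁ (S.unit - c₁) hEp hEc₁ hEq (by rw [hkey1]; exact S.eff_unit)
    rwa [hkey1, S.seq_unit hEp, hpc₁] at h2
  -- `e & a = 0`
  have hea : S.seq (S.seq p (S.unit - c₁)) a = 0 := by
    have h3 : S.seq (S.seq p (S.unit - c₁)) a = S.seq (S.unit - c₁) (S.seq p a) := by
      rw [hcpq, ← S.s5 (S.unit - c₁) p a hEq hEp ha hcpq.symm]
    have h4 : S.seq (S.unit - c₁) (S.seq p a) ≤ S.seq (S.unit - c₁) c₁ :=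
      S.seq_mono hEq (S.seq_eff p a hEp ha) hEc₁ hpa_le
    rw [S.sharp_compl_seq hc₁s] at h4
    exact le_antisymm (h3 ▸ h4) (S.seq_nonneg hEe ha)
  -- hence `a ≤ 1 - e`, hence `d ≤ 1 - e`
  have ha_le_e : a ≤ S.unit - S.seq p (S.unit - c₁) := S.sharp_orth hes ha hea
  have hd_le : d ≤ S.unit - S.seq p (S.unit - c₁) :=
    hdmin _ (S.sharp_compl hes) ha_le_e
  -- `p & (1 - e) = c₁`
  have hpe : S.seq p (S.seq p (S.unit - c₁)) = S.seq p (S.unit - c₁) := by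
    rw [S.s5 p p (S.unit - c₁) hEp hEp hEq rfl, hp.2]
  have hkey : S.seq p (S.unit - S.seq p (S.unit - c₁)) = c₁ := by
    have hkey2 : S.seq p (S.unit - c₁) + (S.unit - S.seq p (S.unit - c₁)) = S.unit := by abel
    have h5 := S.s1 p (S.seq p (S.unit - c₁)) (S.unit - S.seq p (S.unit - c₁))
        hEp hEe (S.eff_compl hEe) (by rw [hkey2]; exact S.eff_unit)
    rw [hkey2, S.seq_unit hEp, hpe] at h5
    -- h5 : p = e + p & (1 - e)
    have h6 : S.seq p (S.unit - S.seq p (S.unit - c₁)) = p - S.seq p (S.unit - c₁) := by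
      rw [eq_sub_iff_add_eq, add_comm]; exact h5.symm
    rw [h6]
    exact sub_eq_iff_eq_add.mpr hsum
  have m2 : S.seq p d ≤ c₁ := by
    have := S.seq_mono hEp hEd (S.eff_compl hEe) hd_le
    rwa [hkey] at this
  exact le_antisymm le12 (hc₂min c₁ hc₁s m2)
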